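/- Fix A, B, C, D > 0 and d ∈ ℝ, set 𝕀 = diag(A, B, C) and 𝐈(Γ) = 𝕀 + D·E − D·Γ Γᵀ. Let Ω, Γ : ℝ → ℝ³ be differentiable curves with |Γ(t)| = 1 for all t, set 𝐌(t) = 𝐈(Γ(t))Ω(t) + dΓ(t), and suppose 𝐌̇(t) = 𝐌(t) × Ω(t) and Γ̇(t) = − Γ(t) × Ω(t) for all t (i.e., the system with ε = −1, which arises in configuration III when 2r = 3R). Then the function F₃(t) = (B + C − A + D) 𝐌₁(t) Γ₁(t) + (A + C − B + D) 𝐌₂(t) Γ₂(t) + (A + B − C + D) 𝐌₃(t) Γ₃(t) is constant in t. -/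

import Mathlib

/-!
`F₃(M, Γ) = ⟨M, K Γ⟩` with `K = (A+B+C+D)·E − 2𝕀` is bilinear, so along a solution with
`ε = −1` its derivative is `F₃(M × Ω, Γ) − F₃(M, Γ × Ω)`. Once `M = 𝐈(Γ)Ω + dΓ` is
substituted, the two terms agree as polynomials in the coordinates of `Γ` and `Ω`.
-/

open Matrix

/-- The modified inertia operator `𝐈(Γ) = diag(A,B,C) + D·E − D·Γ Γᵀ` of the
spherical ball bearing problem with one ball. -/
noncomputable def modInertia (A B C D : ℝ) (Γ : Fin 3 → ℝ) : Matrix (Fin 3) (Fin 3) ℝ :=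
  Matrix.diagonal ![A, B, C] + D • (1 : Matrix (Fin 3) (Fin 3) ℝ) - D • vecMulVec Γ Γ

def firstIntegral (A B C D : ℝ) (M Γ : Fin 3 → ℝ) : ℝ :=
  (B + C - A + D) * M 0 * Γ 0 + (A + C - B + D) * M 1 * Γ 1 + (A + B - C + D) * M 2 * Γ 2

section firstIntegral

variable (A B C D : ℝ)

theorem modInertia_mulVec (Γ Ω : Fin 3 → ℝ) :
    modInertia A B C D Γ *ᵥ Ω
      = ![(A + D) * Ω 0, (B + D) * Ω 1, (C + D) * Ω 2] - (D * (Γ ⬝ᵥ Ω)) • Γ := by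
  ext i
  fin_cases i <;>
    simp only [modInertia, sub_mulVec, add_mulVec, mulVec_diagonal, smul_mulVec, one_mulVec,
      vecMulVec_mulVec, op_smul_eq_mul, Pi.add_apply, Pi.sub_apply, Pi.smul_apply, smul_eq_mul,
      dotProduct,
      Fin.sum_univ_three, Fin.zero_eta, Fin.mk_one, Fin.reduceFinMk, cons_val_zero, cons_val_one,
      cons_val_two, head_cons, tail_cons] <;> ring

theorem firstIntegral_neg_right (M Γ : Fin 3 → ℝ) :
    firstIntegral A B C D M (-Γ) = -firstIntegral A B C D M Γ := by
  simp only [firstIntegral, Pi.neg_apply]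
  ring

theorem HasDerivAt.firstIntegral {M Γ : ℝ → Fin 3 → ℝ} {M' Γ' : Fin 3 → ℝ} {t : ℝ}
    (hM : HasDerivAt M M' t) (hΓ : HasDerivAt Γ Γ' t) :
    HasDerivAt (fun u => firstIntegral A B C D (M u) (Γ u))
      (firstIntegral A B C D M' (Γ t) + firstIntegral A B C D (M t) Γ') t := by
  have hM_ i := hasDerivAt_pi.1 hM i
  have hΓ_ i := hasDerivAt_pi.1 hΓ i
  refine ((((hM_ 0).const_mul (B + C - A + D)).mul (hΓ_ 0)).add
      (((hM_ 1).const_mul (A + C - B + D)).mul (hΓ_ 1)) |>.add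
      (((hM_ 2).const_mul (A + B - C + D)).mul (hΓ_ 2))).congr_deriv ?_
  simp only [_root_.firstIntegral]
  ring

theorem firstIntegral_cross_left_eq_cross_right {d : ℝ} {M Γ Ω : Fin 3 → ℝ}
    (hM : M = modInertia A B C D Γ *ᵥ Ω + d • Γ) :
    firstIntegral A B C D (M ⨯₃ Ω) Γ = firstIntegral A B C D M (Γ ⨯₃ Ω) := by
  subst hM
  rw [modInertia_mulVec]
  simp only [firstIntegral, cross_apply, dotProduct, Fin.sum_univ_three, Pi.add_apply,
    Pi.sub_apply, Pi.smul_apply, smul_eq_mul, cons_val_zero, cons_val_one, cons_val_two,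
    head_cons, tail_cons]
  ring

end firstIntegral

theorem spherical_ball_bearing_first_integrable_case
    (A B C D : ℝ) (d : ℝ)
    (Ω Γ : ℝ → Fin 3 → ℝ)
    (M : ℝ → Fin 3 → ℝ)
    (hM : ∀ t : ℝ, M t = (modInertia A B C D (Γ t)).mulVec (Ω t) + d • Γ t)
    (hMdot : ∀ t : ℝ, HasDerivAt M (M t ⨯₃ Ω t) t)
    (hΓdot : ∀ t : ℝ, HasDerivAt Γ (-(Γ t ⨯₃ Ω t)) t) :
    ∀ s t : ℝ,
      (B + C - A + D) * M s 0 * Γ s 0 + (A + C - B + D) * M s 1 * Γ s 1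
          + (A + B - C + D) * M s 2 * Γ s 2 =
        (B + C - A + D) * M t 0 * Γ t 0 + (A + C - B + D) * M t 1 * Γ t 1
          + (A + B - C + D) * M t 2 * Γ t 2 := by
  have hderiv (u : ℝ) : HasDerivAt (fun u => firstIntegral A B C D (M u) (Γ u)) 0 u := by
    convert (hMdot u).firstIntegral A B C D (hΓdot u) using 1
    rw [firstIntegral_neg_right, firstIntegral_cross_left_eq_cross_right A B C D (hM u),
      add_neg_cancel]
  exact is_const_of_deriv_eq_zero (fun u => (hderiv u).differentiableAt)
    (fun u => (hderiv u).deriv)
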